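/- arXiv:1304.2012 — 4 statements merged into one kernel-verified Lean document; each statement's English description precedes it below -/
import Mathlib

section
/- Along any smooth evolution φ of a closed hypersurface satisfying the Euler–Lagrange equation ∂_t v = ΔH + H|A|² - H³/2 + v²H/2, the energy E(φ_t) = ∫_M (v² - H²) dμ̄_t is constant in time. -/
/-!
Differentiating under the integral (the integrand's time derivative is uniformly bounded),
the energy changes at the rate `∫ (2 v ∂ₜv - 2 H ∂ₜH) dμ̄ + ∫ (v² - H²) ∂ₜ(dμ̄)`. Inserting the
Euler–Lagrange equation, the variation of `H` and `∂ₜ dμ̄ = -vH dμ̄`, the `|A|²` terms and the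
cubic terms cancel, leaving `2 ∫ (v ΔH - H Δv) dμ̄`, which vanishes by integration by parts.
-/

open MeasureTheory Set

section DerivativeUnderIntegral

variable {α E : Type*} [MeasurableSpace α] {μ : Measure α} [IsFiniteMeasure μ]
  [NormedAddCommGroup E] [NormedSpace ℝ E] {F F' : ℝ → α → E} {B : ℝ}

theorem hasDerivAt_integral_of_forall_hasDerivAt_of_norm_le {t₀ : ℝ}
    (hF_meas : ∀ t, AEStronglyMeasurable (F t) μ) (hF_int : Integrable (F t₀) μ)
    (hF'_meas : AEStronglyMeasurable (F' t₀) μ) (h_bound : ∀ t x, ‖F' t x‖ ≤ B)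
    (h_diff : ∀ t x, HasDerivAt (F · x) (F' t x) t) :
    HasDerivAt (fun t => ∫ x, F t x ∂μ) (∫ x, F' t₀ x ∂μ) t₀ :=
  (hasDerivAt_integral_of_dominated_loc_of_deriv_le (bound := fun _ => B) Filter.univ_mem
    (.of_forall hF_meas) hF_int hF'_meas (.of_forall fun x t _ => h_bound t x)
    (integrable_const B) (.of_forall fun x t _ => h_diff t x)).2

theorem integral_eq_of_integral_deriv_eq_zero
    (hF_int : ∀ t, Integrable (F t) μ) (hF'_meas : ∀ t, AEStronglyMeasurable (F' t) μ)
    (h_bound : ∀ t x, ‖F' t x‖ ≤ B) (h_diff : ∀ t x, HasDerivAt (F · x) (F' t x) t)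
    (h_zero : ∀ t, ∫ x, F' t x ∂μ = 0) (t₁ t₂ : ℝ) :
    ∫ x, F t₁ x ∂μ = ∫ x, F t₂ x ∂μ := by
  have hderiv (t : ℝ) : HasDerivAt (fun t => ∫ x, F t x ∂μ) 0 t := by
    simpa only [h_zero] using hasDerivAt_integral_of_forall_hasDerivAt_of_norm_le
      (fun s => (hF_int s).aestronglyMeasurable) (hF_int t) (hF'_meas t) h_bound h_diff
  exact is_const_of_deriv_eq_zero (fun t => (hderiv t).differentiableAt)
    (fun t => (hderiv t).deriv) t₁ t₂

end DerivativeUnderIntegral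

theorem hasDerivAt_sq_sub_sq_mul {v H m : ℝ → ℝ} {v' H' m' t : ℝ} (hv : HasDerivAt v v' t)
    (hH : HasDerivAt H H' t) (hm : HasDerivAt m m' t) :
    HasDerivAt (fun s => (v s ^ 2 - H s ^ 2) * m s)
      ((2 * v t * v' - 2 * H t * H') * m t + (v t ^ 2 - H t ^ 2) * m') t := by
  refine (((hv.fun_pow 2).fun_sub (hH.fun_pow 2)).mul hm).congr_deriv ?_
  ring

theorem energy_density_deriv_eq (v H A2 Lv LH m : ℝ) :
    (2 * v * (LH + H * A2 - H ^ 3 / 2 + v ^ 2 * H / 2) - 2 * H * (Lv + v * A2)) * m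
      + (v ^ 2 - H ^ 2) * (-v * H * m) = 2 * ((v * LH - H * Lv) * m) := by
  ring

theorem abs_two_mul_sub_mul_mul_le {a b c d e C : ℝ} (ha : |a| ≤ C) (hb : |b| ≤ C)
    (hc : |c| ≤ C) (hd : |d| ≤ C) (he : |e| ≤ C) :
    |2 * ((a * b - c * d) * e)| ≤ 4 * C ^ 3 := by
  have hC : 0 ≤ C := (abs_nonneg a).trans ha
  calc |2 * ((a * b - c * d) * e)| ≤ 2 * ((|a| * |b| + |c| * |d|) * |e|) := by
        rw [abs_mul, abs_mul, abs_two]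
        gcongr
        exact (abs_sub _ _).trans_eq (by rw [abs_mul, abs_mul])
    _ ≤ 2 * ((C * C + C * C) * C) := by gcongr
    _ = 4 * C ^ 3 := by ring

/-- `m` is the density of `μ̄_t` with respect to `μref`, `A2 = |A|²`, `Lv = Δv` and `LH = ΔH`. -/
theorem stmt_9_general (M : Type*) [MeasurableSpace M] (μref : Measure M) [IsFiniteMeasure μref]
    (T : ℝ)
    (v H A2 Lv LH m dv dH dm : M → ℝ → ℝ)
    (hdm : ∀ x t, HasDerivAt (m x) (dm x t) t)
    (hdv : ∀ x t, HasDerivAt (v x) (dv x t) t)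
    (hdH : ∀ x t, HasDerivAt (H x) (dH x t) t)
    (heqm : ∀ x t, dm x t = -(v x t) * H x t * m x t)
    (heqv : ∀ x t, dv x t
      = LH x t + H x t * A2 x t - (H x t)^3 / 2 + (v x t)^2 * H x t / 2)
    (heqH : ∀ x t, dH x t = Lv x t + v x t * A2 x t)
    (hIBP : ∀ t, ∫ x, (v x t * LH x t - H x t * Lv x t) * m x t ∂μref = 0)
    (hbdd : ∃ C : ℝ, ∀ x t, |v x t| ≤ C ∧ |H x t| ≤ C ∧ |A2 x t| ≤ C
      ∧ |Lv x t| ≤ C ∧ |LH x t| ≤ C ∧ |m x t| ≤ C)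
    (hint : ∀ t, Integrable (fun x => ((v x t)^2 - (H x t)^2) * m x t) μref)
    (hint' : ∀ t, Integrable (fun x =>
      (2 * v x t * dv x t - 2 * H x t * dH x t) * m x t
        + ((v x t)^2 - (H x t)^2) * dm x t) μref) :
    ∀ t₁ ∈ Icc 0 T, ∀ t₂ ∈ Icc 0 T,
      ∫ x, ((v x t₁)^2 - (H x t₁)^2) * m x t₁ ∂μref
        = ∫ x, ((v x t₂)^2 - (H x t₂)^2) * m x t₂ ∂μref := by
  obtain ⟨C, hC⟩ := hbdd
  have hF'_eq (t : ℝ) (x : M) :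
      (2 * v x t * dv x t - 2 * H x t * dH x t) * m x t + ((v x t)^2 - (H x t)^2) * dm x t
        = 2 * ((v x t * LH x t - H x t * Lv x t) * m x t) := by
    rw [heqv, heqH, heqm, energy_density_deriv_eq]
  intro t₁ _ t₂ _
  refine integral_eq_of_integral_deriv_eq_zero (B := 4 * C ^ 3) hint
    (fun t => (hint' t).aestronglyMeasurable) (fun t x => ?_)
    (fun t x => hasDerivAt_sq_sub_sq_mul (hdv x t) (hdH x t) (hdm x t)) (fun t => ?_) t₁ t₂
  · obtain ⟨hv, hH, -, hLv, hLH, hm⟩ := hC x t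
    rw [Real.norm_eq_abs, hF'_eq]
    exact abs_two_mul_sub_mul_mul_le hv hLH hH hLv hm
  · simp only [hF'_eq, integral_const_mul, hIBP, mul_zero]

/-- Energy conservation along smooth solutions of the Euler--Lagrange equation
`∂ₜv = ΔH + H|A|² - H³/2 + v²H/2`. The evolving surface measure is encoded by a
density `m` with respect to a reference measure `μref` on the abstract closed
manifold `M`, satisfying `∂ₜ m = -vH m`; the Laplace-Beltrami terms `Lv = Δv`,
`LH = ΔH` satisfy the integration by parts identity, and `∂ₜH = Δv + v|A|²`. -/
theorem stmt_9 (M : Type*) [MeasurableSpace M] (μref : Measure M) [IsFiniteMeasure μref]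
    (T : ℝ) (hT : 0 < T)
    (v H A2 Lv LH m dv dH dm : M → ℝ → ℝ)
    (hmpos : ∀ x t, 0 < m x t)
    (hdm : ∀ x t, HasDerivAt (m x) (dm x t) t)
    (hdv : ∀ x t, HasDerivAt (v x) (dv x t) t)
    (hdH : ∀ x t, HasDerivAt (H x) (dH x t) t)
    (heqm : ∀ x t, dm x t = -(v x t) * H x t * m x t)
    (heqv : ∀ x t, dv x t
      = LH x t + H x t * A2 x t - (H x t)^3 / 2 + (v x t)^2 * H x t / 2)
    (heqH : ∀ x t, dH x t = Lv x t + v x t * A2 x t)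
    (hIBP : ∀ t, ∫ x, (v x t * LH x t - H x t * Lv x t) * m x t ∂μref = 0)
    (hbdd : ∃ C : ℝ, ∀ x t, |v x t| ≤ C ∧ |H x t| ≤ C ∧ |A2 x t| ≤ C
      ∧ |Lv x t| ≤ C ∧ |LH x t| ≤ C ∧ |m x t| ≤ C)
    (hint : ∀ t, Integrable (fun x => ((v x t)^2 - (H x t)^2) * m x t) μref)
    (hint' : ∀ t, Integrable (fun x =>
      (2 * v x t * dv x t - 2 * H x t * dH x t) * m x t
        + ((v x t)^2 - (H x t)^2) * dm x t) μref) :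
    ∀ t₁ ∈ Icc 0 T, ∀ t₂ ∈ Icc 0 T,
      ∫ x, ((v x t₁)^2 - (H x t₁)^2) * m x t₁ ∂μref
        = ∫ x, ((v x t₂)^2 - (H x t₂)^2) * m x t₂ ∂μref :=
  stmt_9_general M μref T v H A2 Lv LH m dv dH dm hdm hdv hdH heqm heqv heqH hIBP hbdd hint hint'
end

section
/- Let R₀ > R_T > 0 and T > 0 with T ≥ (R₀² - R_T²)/4. For any c ∈ ℝ with c² ≤ 1, and any smooth evolution of closed surfaces in ℝ³ connecting spheres of areas 4πR₀² and 4πR_T², one has ∫₀^T∫_M (v² + H²) dμ̄_t dt ≥ 8πc(R₀² - R_T²) + 16π(1-c²)T, using 2∫₀^T∫ vH dμ̄ dt = 8π(R₀² - R_T²), the pointwise inequality v² + H² ≥ 2c·vH + (1-c²)H² (valid since (v - cH)² ≥ 0), and the Willmore bound ∫_M H² dμ̄_t ≥ 16π. -/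
open MeasureTheory Set Real

/-!
Completing the square, `v² + H² = (v - cH)² + 2c·vH + (1 - c²)H²`, so the action dominates
`2c ∫∫ vH + (1 - c²) ∫∫ H²`. The first term is `c` times the area change `8π(R₀² - R_T²)`, and
for `c² ≤ 1` the Willmore bound `∫ H² ≥ 16π` at every time bounds the second below by
`16π(1 - c²)T`.
-/

lemma two_mul_mul_add_one_sub_sq_mul_le (c v H m : ℝ) (hm : 0 ≤ m) :
    2 * c * (v * H * m) + (1 - c ^ 2) * (H ^ 2 * m) ≤ (v ^ 2 + H ^ 2) * m := by
  nlinarith [mul_nonneg (sq_nonneg (v - c * H)) hm]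

lemma integral_linear_combination_le {X : Type*} [MeasurableSpace X] {μ : Measure X}
    {f g h : X → ℝ} (a b : ℝ) (hf : Integrable f μ) (hg : Integrable g μ) (hh : Integrable h μ)
    (hle : ∀ x, a * f x + b * g x ≤ h x) :
    a * ∫ x, f x ∂μ + b * ∫ x, g x ∂μ ≤ ∫ x, h x ∂μ := by
  rw [← integral_const_mul, ← integral_const_mul,
    ← integral_add (hf.const_mul a) (hg.const_mul b)]
  exact integral_mono ((hf.const_mul a).add (hg.const_mul b)) hh hle

lemma mul_sub_le_setIntegral_Ioo {f : ℝ → ℝ} {a b C : ℝ} (hC : 0 ≤ C)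
    (hf : IntegrableOn f (Ioo a b)) (h : ∀ t ∈ Ioo a b, C ≤ f t) :
    C * (b - a) ≤ ∫ t in Ioo a b, f t :=
  calc C * (b - a) ≤ C * volume.real (Ioo a b) := by
        rw [Real.volume_real_Ioo]
        exact mul_le_mul_of_nonneg_left (le_max_left _ _) hC
    _ ≤ ∫ t in Ioo a b, f t :=
        setIntegral_ge_of_const_le_real measurableSet_Ioo measure_Ioo_lt_top.ne h hf

/-- The evolving surface measure `dμ̄ₜ` is encoded as the density `m (·) t ≥ 0` against the
fixed reference measure `μref`. -/
theorem stmt_15_general (M : Type*) [MeasurableSpace M] (μref : Measure M)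
    (T R₀ RT c : ℝ) (hc : c^2 ≤ 1)
    (v H m : M → ℝ → ℝ) (hm : ∀ x t, 0 ≤ m x t)
    (hi1 : ∀ t, Integrable (fun x => ((v x t)^2 + (H x t)^2) * m x t) μref)
    (hi2 : ∀ t, Integrable (fun x => v x t * H x t * m x t) μref)
    (hi3 : ∀ t, Integrable (fun x => (H x t)^2 * m x t) μref)
    (hj1 : IntegrableOn (fun t => ∫ x, ((v x t)^2 + (H x t)^2) * m x t ∂μref) (Ioo 0 T))
    (hj2 : IntegrableOn (fun t => ∫ x, v x t * H x t * m x t ∂μref) (Ioo 0 T))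
    (hj3 : IntegrableOn (fun t => ∫ x, (H x t)^2 * m x t ∂μref) (Ioo 0 T))
    (harea : 2 * ∫ t in Ioo 0 T, ∫ x, v x t * H x t * m x t ∂μref
      = 8*π*(R₀^2 - RT^2))
    (hWillmore : ∀ t ∈ Ioo 0 T, 16*π ≤ ∫ x, (H x t)^2 * m x t ∂μref) :
    8*π*c*(R₀^2 - RT^2) + 16*π*(1 - c^2)*T
      ≤ ∫ t in Ioo 0 T, ∫ x, ((v x t)^2 + (H x t)^2) * m x t ∂μref := by
  have hspace : ∀ t, 2 * c * ∫ x, v x t * H x t * m x t ∂μref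
      + (1 - c ^ 2) * ∫ x, (H x t)^2 * m x t ∂μref
      ≤ ∫ x, ((v x t)^2 + (H x t)^2) * m x t ∂μref := fun t =>
    integral_linear_combination_le _ _ (hi2 t) (hi3 t) (hi1 t)
      fun x => two_mul_mul_add_one_sub_sq_mul_le c _ _ _ (hm x t)
  have hspacetime := integral_linear_combination_le _ _ hj2 hj3 hj1 hspace
  have hwillmore : 16 * π * (T - 0) ≤ ∫ t in Ioo 0 T, ∫ x, (H x t)^2 * m x t ∂μref :=
    mul_sub_le_setIntegral_Ioo (by positivity) hj3 hWillmore
  have hcoef : 0 ≤ 1 - c ^ 2 := by linarith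
  linear_combination hspacetime + mul_le_mul_of_nonneg_left hwillmore hcoef - c * harea

/-- Lower bound for the action of any smooth evolution of closed surfaces in ℝ³
connecting concentric round spheres of radii `R₀ > R_T`, given the area identity
`2∫∫ vH dμ̄ dt = 8π(R₀² - R_T²)` and the Willmore bound `∫ H² dμ̄ₜ ≥ 16π`. The
evolving surface measure is encoded as a density `m ≥ 0` against a reference
measure `μref` on the abstract surface `M`. -/
theorem stmt_15 (M : Type*) [MeasurableSpace M] (μref : Measure M)
    (T R₀ RT c : ℝ) (hRT : 0 < RT) (hR : RT < R₀) (hT0 : 0 < T)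
    (hT : (R₀^2 - RT^2)/4 ≤ T) (hc : c^2 ≤ 1)
    (v H m : M → ℝ → ℝ) (hm : ∀ x t, 0 ≤ m x t)
    (hi1 : ∀ t, Integrable (fun x => ((v x t)^2 + (H x t)^2) * m x t) μref)
    (hi2 : ∀ t, Integrable (fun x => v x t * H x t * m x t) μref)
    (hi3 : ∀ t, Integrable (fun x => (H x t)^2 * m x t) μref)
    (hj1 : IntegrableOn (fun t => ∫ x, ((v x t)^2 + (H x t)^2) * m x t ∂μref) (Ioo 0 T))
    (hj2 : IntegrableOn (fun t => ∫ x, v x t * H x t * m x t ∂μref) (Ioo 0 T))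
    (hj3 : IntegrableOn (fun t => ∫ x, (H x t)^2 * m x t ∂μref) (Ioo 0 T))
    (harea : 2 * ∫ t in Ioo 0 T, ∫ x, v x t * H x t * m x t ∂μref
      = 8*π*(R₀^2 - RT^2))
    (hWillmore : ∀ t ∈ Ioo 0 T, 16*π ≤ ∫ x, (H x t)^2 * m x t ∂μref) :
    8*π*c*(R₀^2 - RT^2) + 16*π*(1 - c^2)*T
      ≤ ∫ t in Ioo 0 T, ∫ x, ((v x t)^2 + (H x t)^2) * m x t ∂μref :=
  stmt_15_general M μref T R₀ RT c hc v H m hm hi1 hi2 hi3 hj1 hj2 hj3 harea hWillmore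
end

section
/- For every integer l ≥ 0 and every T ≥ (√3/3)·T_MCF with T_MCF > 0, the quantity 4(2 - l(l+1))·T_MCF²/T² + 2((l(l+1) - 1)² - 1) is nonnegative. Conversely, for each fixed l ≥ 2 there exists T > 0 small enough so that this quantity is negative. -/
/-!
With `λ = l(l+1)` and `τ = T_MCF²/T²` the coefficient factors as `2(λ - 2)(λ - 2τ)`.
The spectrum of the spherical Laplacian has a gap: `λ ∈ {0, 2}` or `λ ≥ 6`. For `λ = 0` the
coefficient is `8τ ≥ 0`, for `λ = 2` it vanishes, and for `λ ≥ 6` it is nonnegative as soon as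
`τ ≤ 3`, which is exactly `T ≥ T_MCF/√3`. Conversely, for `λ > 2` it turns negative once
`τ > λ/2`, e.g. for `T = T_MCF/(l+1)`.
-/

/-- The coefficient of the `l`-th spherical harmonic mode, with `lam = l(l+1)` and
`τ = T_MCF²/T²`. -/
def modeCoeff (lam τ : ℝ) : ℝ := 4 * (2 - lam) * τ + 2 * ((lam - 1) ^ 2 - 1)

theorem modeCoeff_eq_mul (lam τ : ℝ) : modeCoeff lam τ = 2 * (lam - 2) * (lam - 2 * τ) := by
  unfold modeCoeff; ring

theorem modeCoeff_nonneg {lam τ : ℝ} (hlam : lam = 0 ∨ lam = 2 ∨ 6 ≤ lam)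
    (hτ₀ : 0 ≤ τ) (hτ : τ ≤ 3) : 0 ≤ modeCoeff lam τ := by
  rw [modeCoeff_eq_mul]
  rcases hlam with rfl | rfl | hlam
  · nlinarith
  · simp
  · exact mul_nonneg (mul_nonneg two_pos.le (by linarith)) (by linarith)

theorem modeCoeff_neg {lam τ : ℝ} (hlam : 2 < lam) (hτ : lam < 2 * τ) :
    modeCoeff lam τ < 0 := by
  rw [modeCoeff_eq_mul]
  exact mul_neg_of_pos_of_neg (by linarith) (by linarith)

theorem natCast_mul_succ_eq_zero_or_eq_two_or_six_le (l : ℕ) :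
    (l * (l + 1) : ℝ) = 0 ∨ (l * (l + 1) : ℝ) = 2 ∨ 6 ≤ (l * (l + 1) : ℝ) := by
  rcases l with _ | _ | l
  · simp
  · norm_num
  · right; right; push_cast; nlinarith

theorem sq_div_sq_le_three {a T : ℝ} (ha : 0 < a) (hT : √3 / 3 * a ≤ T) : a ^ 2 / T ^ 2 ≤ 3 := by
  have hT₀ : 0 < T := lt_of_lt_of_le (by positivity) hT
  have hsq : √3 ^ 2 = 3 := Real.sq_sqrt (by norm_num)
  have : a ^ 2 ≤ 3 * T ^ 2 := by
    nlinarith [mul_le_mul hT hT (by positivity) hT₀.le]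
  rwa [div_le_iff₀ (by positivity)]

theorem stmt_18 (Tmcf : ℝ) (hTm : 0 < Tmcf) :
    (∀ l : ℕ, ∀ T : ℝ, Real.sqrt 3 / 3 * Tmcf ≤ T →
      0 ≤ 4 * (2 - (l*(l+1) : ℝ)) * Tmcf^2 / T^2
            + 2 * (((l*(l+1) : ℝ) - 1)^2 - 1))
    ∧ (∀ l : ℕ, 2 ≤ l → ∃ T : ℝ, 0 < T ∧
        4 * (2 - (l*(l+1) : ℝ)) * Tmcf^2 / T^2
          + 2 * (((l*(l+1) : ℝ) - 1)^2 - 1) < 0) := by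
  refine ⟨fun l T hT ↦ ?_, fun l hl ↦ ⟨Tmcf / (l + 1), by positivity, ?_⟩⟩
  · rw [mul_div_assoc]
    exact modeCoeff_nonneg (natCast_mul_succ_eq_zero_or_eq_two_or_six_le l) (by positivity)
      (sq_div_sq_le_three hTm hT)
  · have hl : (2 : ℝ) ≤ l := by exact_mod_cast hl
    have hτ : Tmcf ^ 2 / (Tmcf / (l + 1)) ^ 2 = ((l : ℝ) + 1) ^ 2 := by
      field_simp
    rw [mul_div_assoc, hτ]
    exact modeCoeff_neg (by nlinarith) (by nlinarith)
end

section
/- Let R₀, R_T > 0 and T > max{R₀²/4, R_T²/4}. If T > (R₀ + R_T)²/4 then 8π(R₀² + R_T²) < 16π(T_MCF²/T + T) where T_MCF = |R₀² - R_T²|/4; i.e. the action of the trajectory with vanishing and point nucleation is strictly smaller than the action of the optimal smooth spherical connection. If T < (R₀+R_T)²/4 the opposite strict inequality holds. -/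
/-!
Multiplied by `T / (8π)`, the difference of the two actions is the quadratic
`2T² - (R₀² + R_T²) T + (R₀² - R_T²)² / 8` in `T`, whose roots are `(R₀ ± R_T)² / 4`.
The hypothesis on `T` puts it above the smaller root `(R₀ - R_T)² / 4`, so the sign of the
difference is the sign of `T - (R₀ + R_T)² / 4`.
-/

open Real

theorem smoothAction_sub_nucleationAction (R₀ RT T : ℝ) (hT : T ≠ 0) :
    16*π*((|R₀^2 - RT^2|/4)^2 / T + T) - 8*π*(R₀^2 + RT^2)
      = 16*π*((T - (R₀ + RT)^2/4) * (T - (R₀ - RT)^2/4)) / T := by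
  rw [div_pow, sq_abs]
  field_simp
  ring

theorem sub_sq_div_four_lt {R₀ RT T : ℝ} (hR₀ : 0 < R₀) (hRT : 0 < RT)
    (hT : max (R₀^2/4) (RT^2/4) < T) : (R₀ - RT)^2/4 < T := by
  have h_sq_le : (R₀ - RT)^2 ≤ max (R₀^2) (RT^2) := by
    rcases le_total R₀ RT with h | h
    · exact le_max_of_le_right (by nlinarith)
    · exact le_max_of_le_left (by nlinarith)
  calc (R₀ - RT)^2/4 ≤ max (R₀^2) (RT^2) / 4 := by gcongr
    _ = max (R₀^2/4) (RT^2/4) := (max_div_div_right (by norm_num) _ _).symm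
    _ < T := hT

theorem stmt_19 (R₀ RT T : ℝ) (hR₀ : 0 < R₀) (hRT : 0 < RT)
    (hT : max (R₀^2/4) (RT^2/4) < T) :
    ((R₀ + RT)^2/4 < T →
      8*π*(R₀^2 + RT^2) < 16*π*((|R₀^2 - RT^2|/4)^2 / T + T))
    ∧ (T < (R₀ + RT)^2/4 →
      16*π*((|R₀^2 - RT^2|/4)^2 / T + T) < 8*π*(R₀^2 + RT^2)) := by
  have hT₀ : 0 < T := (by positivity : 0 < R₀^2/4).trans_le (le_max_left _ _) |>.trans hT
  have h_small_root : 0 < T - (R₀ - RT)^2/4 := sub_pos.2 (sub_sq_div_four_lt hR₀ hRT hT)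
  have h_diff := smoothAction_sub_nucleationAction R₀ RT T hT₀.ne'
  constructor
  · intro h_large
    rw [← sub_pos, h_diff]
    exact div_pos (mul_pos (by positivity) (mul_pos (sub_pos.2 h_large) h_small_root)) hT₀
  · intro h_large
    rw [← sub_neg, h_diff]
    exact div_neg_of_neg_of_pos
      (mul_neg_of_pos_of_neg (by positivity) (mul_neg_of_neg_of_pos (sub_neg.2 h_large) h_small_root))
      hT₀
end
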